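/- Trace vs. Bures distance infinitesimally: Let σ ∈ S_d be a density matrix of full rank with smallest eigenvalue λ_min(σ) > 0. Then there exists ε > 0 (depending on σ) such that for every density matrix ρ ∈ S_d with d_tr(ρ,σ) ≤ ε one has d_B(ρ,σ) ≤ d_tr(ρ,σ)/√(λ_min(σ)). -/

import Mathlib

open scoped Matrix ComplexOrder
open Matrix

section Defs

variable {m : Type*}

/-- The trace norm `‖X‖₁ = tr √(XᴴX)`. -/
noncomputable def traceNorm [Fintype m] [DecidableEq m] (X : Matrix m m ℂ) : ℝ :=
  (((Matrix.posSemidef_conjTranspose_mul_self X).1.eigenvectorUnitary : Matrix m m ℂ) *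
    diagonal (((↑) : ℝ → ℂ) ∘ Real.sqrt ∘ (Matrix.posSemidef_conjTranspose_mul_self X).1.eigenvalues) *
    (star ((Matrix.posSemidef_conjTranspose_mul_self X).1.eigenvectorUnitary : Matrix m m ℂ))).trace.re

/-- The trace distance `d_tr(ρ,σ) = ‖ρ - σ‖₁ / 2`. -/
noncomputable def trDist [Fintype m] [DecidableEq m] (ρ σ : Matrix m m ℂ) : ℝ :=
  traceNorm (ρ - σ) / 2

/-- A density matrix: positive semidefinite (hence Hermitian) with unit trace. -/
def IsDensityMatrix [Fintype m] (ρ : Matrix m m ℂ) : Prop :=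
  ρ.PosSemidef ∧ ρ.trace = 1

/-- Apply a superoperator, given by its matrix representation
(rows/columns indexed by matrix entry positions), to a matrix. -/
noncomputable def appS [Fintype m] (S : Matrix (m × m) (m × m) ℂ) (ρ : Matrix m m ℂ) :
    Matrix m m ℂ :=
  Matrix.of fun i j => ∑ p : m × m, S (i, j) p * ρ p.1 p.2

/-- The Choi matrix of a superoperator. -/
def choiMatrix [Fintype m] (S : Matrix (m × m) (m × m) ℂ) : Matrix (m × m) (m × m) ℂ :=
  Matrix.of fun p q => S (p.2, q.2) (p.1, q.1)

/-- Quantum channel: completely positive (positive semidefinite Choi matrix)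
and trace preserving. -/
def IsQChannelM [Fintype m] (S : Matrix (m × m) (m × m) ℂ) : Prop :=
  (choiMatrix S).PosSemidef ∧ ∀ X : Matrix m m ℂ, (appS S X).trace = X.trace

/-- `expS t L` is the superoperator `e^{tL}`. -/
noncomputable def expS [Fintype m] [DecidableEq m] (t : ℝ) (L : Matrix (m × m) (m × m) ℂ) :
    Matrix (m × m) (m × m) ℂ :=
  NormedSpace.exp ((t : ℂ) • L)

/-- A Liouvillian: `e^{tL}` is a quantum channel for every `t ≥ 0`. -/
def IsLiouvillianM [Fintype m] [DecidableEq m] (L : Matrix (m × m) (m × m) ℂ) : Prop :=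
  ∀ t : ℝ, 0 ≤ t → IsQChannelM (expS t L)

/-- `lam` is the spectral gap of the Liouvillian `L`:
`lam = inf {|Re μ| : μ eigenvalue of L, Re μ < 0}` (and such an eigenvalue exists). -/
def IsGapOf [Fintype m] [DecidableEq m] (L : Matrix (m × m) (m × m) ℂ) (lam : ℝ) : Prop :=
  (∃ μ ∈ spectrum ℂ L, μ.re < 0) ∧
  lam = sInf {r : ℝ | ∃ μ ∈ spectrum ℂ L, μ.re < 0 ∧ r = -μ.re}

/-- `Tφ` is the peripheral evolution `T_{φ,t} = Σ_{k : Re λ_k = 0} e^{tλ_k} P_k` of the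
semigroup generated by `L`: it acts as `e^{tμ}` on each generalized eigenspace of `L` with
`Re μ = 0`, and as `0` on each generalized eigenspace with `Re μ < 0`. -/
def IsPeriphEvolAt [Fintype m] (L : Matrix (m × m) (m × m) ℂ) (t : ℝ)
    (Tφ : Matrix (m × m) (m × m) ℂ) : Prop :=
  (∀ μ : ℂ, μ.re = 0 → ∀ v ∈ Module.End.maxGenEigenspace (Matrix.mulVecLin L) μ,
      Tφ.mulVec v = Complex.exp (t * μ) • v) ∧
  (∀ μ : ℂ, μ.re < 0 → ∀ v ∈ Module.End.maxGenEigenspace (Matrix.mulVecLin L) μ,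
      Tφ.mulVec v = 0)

/-- `Tφ` is the peripheral projection `T_φ = Σ_{k : |μ_k| = 1} μ_k P_k` of the channel `T`:
it acts as `μ •` on each generalized eigenspace of `T` with `|μ| = 1`, and as `0` on each
generalized eigenspace with `|μ| < 1`. -/
def IsPeriphProjM [Fintype m] (T Tφ : Matrix (m × m) (m × m) ℂ) : Prop :=
  (∀ μ : ℂ, ‖μ‖ = 1 → ∀ v ∈ Module.End.maxGenEigenspace (Matrix.mulVecLin T) μ,
      Tφ.mulVec v = μ • v) ∧
  (∀ μ : ℂ, ‖μ‖ < 1 → ∀ v ∈ Module.End.maxGenEigenspace (Matrix.mulVecLin T) μ,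
      Tφ.mulVec v = 0)

/-- The trace-norm contraction `η_tr[T] = sup_ρ d_tr(T(ρ), Tφ(ρ))` over density matrices. -/
noncomputable def etaTR [Fintype m] [DecidableEq m] (T Tφ : Matrix (m × m) (m × m) ℂ) : ℝ :=
  ⨆ ρ : {ρ : Matrix m m ℂ // IsDensityMatrix ρ}, trDist (appS T ρ.1) (appS Tφ ρ.1)

open scoped Classical in
/-- Matrix square root of a positive semidefinite matrix (junk value `0` otherwise). -/
noncomputable def msqrt [Fintype m] [DecidableEq m] (A : Matrix m m ℂ) : Matrix m m ℂ :=
  if h : A.PosSemidef then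
    (h.1.eigenvectorUnitary : Matrix m m ℂ) * diagonal (((↑) : ℝ → ℂ) ∘ Real.sqrt ∘ h.1.eigenvalues) *
      (star (h.1.eigenvectorUnitary : Matrix m m ℂ)) else 0

/-- The fidelity `F(ρ,σ) = tr √(√ρ σ √ρ)`. -/
noncomputable def fidelity [Fintype m] [DecidableEq m] (ρ σ : Matrix m m ℂ) : ℝ :=
  ((msqrt (msqrt ρ * σ * msqrt ρ)).trace).re

/-- The Bures distance `d_B(ρ,σ) = √(1 - F(ρ,σ))`. -/
noncomputable def buresDist [Fintype m] [DecidableEq m] (ρ σ : Matrix m m ℂ) : ℝ :=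
  Real.sqrt (1 - fidelity ρ σ)

/-- The Frobenius (Hilbert-Schmidt) norm `‖X‖₂ = √(tr XᴴX)`. -/
noncomputable def frobNorm [Fintype m] (X : Matrix m m ℂ) : ℝ :=
  Real.sqrt ((Xᴴ * X).trace.re)

/-- The operator (spectral) norm `‖A‖_∞`. -/
noncomputable def specNorm [Fintype m] [DecidableEq m] (A : Matrix m m ℂ) : ℝ :=
  ‖(Matrix.toEuclideanLin A).toContinuousLinearMap‖

/-- The superoperator norm `‖S‖_{2→2} = sup {‖S(X)‖₂ : ‖X‖₂ ≤ 1}` induced by the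
Frobenius norm. -/
noncomputable def superNorm22 [Fintype m] (S : Matrix (m × m) (m × m) ℂ) : ℝ :=
  ⨆ X : {X : Matrix m m ℂ // frobNorm X ≤ 1}, frobNorm (appS S X.1)

/-- The dual (Heisenberg-picture) superoperator `S*`, satisfying
`tr[A S*(B)] = tr[S(A) B]`. -/
def dualS [Fintype m] (S : Matrix (m × m) (m × m) ℂ) : Matrix (m × m) (m × m) ℂ :=
  Matrix.of fun p q => S (q.2, q.1) (p.2, p.1)

/-- Matrix representation of the superoperator `ρ ↦ A ρ B`. -/
def sandwichS [Fintype m] (A B : Matrix m m ℂ) : Matrix (m × m) (m × m) ℂ :=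
  Matrix.of fun p q => A p.1 q.1 * B q.2 p.2

/-- The Lindblad dissipator `ρ ↦ L ρ L† − (1/2)L†L ρ − (1/2)ρ L†L` in matrix
representation. -/
noncomputable def lindbladTermS [Fintype m] [DecidableEq m] (L : Matrix m m ℂ) :
    Matrix (m × m) (m × m) ℂ :=
  sandwichS L Lᴴ - (1 / 2 : ℂ) • sandwichS (Lᴴ * L) 1 - (1 / 2 : ℂ) • sandwichS 1 (Lᴴ * L)

/-- Tensor (Kronecker) product of two superoperators. -/
def kronS {m' : Type*} [Fintype m] [Fintype m'] (S : Matrix (m × m) (m × m) ℂ)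
    (S' : Matrix (m' × m') (m' × m') ℂ) :
    Matrix ((m × m') × (m × m')) ((m × m') × (m × m')) ℂ :=
  Matrix.of fun p q =>
    S (p.1.1, p.2.1) (q.1.1, q.2.1) * S' (p.1.2, p.2.2) (q.1.2, q.2.2)

end Defs

/-- `n`-fold tensor power `S^{⊗n}` of a superoperator on `M_d`. -/
noncomputable def tensorPowS (n : ℕ) {d : ℕ} (S : Matrix (Fin d × Fin d) (Fin d × Fin d) ℂ) :
    Matrix ((Fin n → Fin d) × (Fin n → Fin d)) ((Fin n → Fin d) × (Fin n → Fin d)) ℂ :=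
  Matrix.of fun p q => ∏ i, S (p.1 i, p.2 i) (q.1 i, q.2 i)

/-- `n`-fold tensor power `ρ^{⊗n}` of a matrix. -/
noncomputable def tensorPowM (n : ℕ) {d : ℕ} (ρ : Matrix (Fin d) (Fin d) ℂ) :
    Matrix (Fin n → Fin d) (Fin n → Fin d) ℂ :=
  Matrix.of fun x y => ∏ i, ρ (x i) (y i)

/-- Tensor product `A 0 ⊗ A 1 ⊗ … ⊗ A (n-1)` of a family of matrices. -/
noncomputable def tensorFamilyM {n d : ℕ} (A : Fin n → Matrix (Fin d) (Fin d) ℂ) :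
    Matrix (Fin n → Fin d) (Fin n → Fin d) ℂ :=
  Matrix.of fun x y => ∏ i, A i (x i) (y i)

/-!
Write `A = √ρ`, `B = √σ` and `c = √λ_min(σ)`, so that `c ≤ B`. Then
`F(ρ,σ) = ‖B A‖₁ ≥ Re tr(B A) = 1 - ‖A - B‖₂² / 2`. The Sylvester identity
`A (A - B) + (A - B) B = ρ - σ` gives `Re tr((A - B)(ρ - σ)) ≥ c ‖A - B‖₂²`, and comparing with
`0 ≤ ‖c (A - B) - (ρ - σ)‖₂²` yields `c ‖A - B‖₂ ≤ ‖ρ - σ‖₂`. Finally `ρ - σ` is traceless, so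
none of its eigenvalues exceeds half its trace norm and `‖ρ - σ‖₂² ≤ 2 d_tr(ρ,σ)²`. Altogether
`1 - F ≤ d_tr² / λ_min` for every density matrix `ρ`, so any `ε > 0` works.
-/

open scoped MatrixOrder InnerProductSpace

lemma Finset.sum_sq_le_sq_sum_abs_div_two {ι : Type*} [DecidableEq ι] (s : Finset ι)
    (e : ι → ℝ) (h : ∑ i ∈ s, e i = 0) :
    ∑ i ∈ s, e i ^ 2 ≤ (∑ i ∈ s, |e i|) ^ 2 / 2 := by
  set S := ∑ i ∈ s, |e i|
  have hmax : ∀ k ∈ s, |e k| ≤ S / 2 := by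
    intro k hk
    have hrest : e k = -∑ i ∈ s.erase k, e i := by
      linarith [Finset.add_sum_erase s e hk]
    have hle : |e k| ≤ ∑ i ∈ s.erase k, |e i| := by
      rw [hrest, abs_neg]
      exact Finset.abs_sum_le_sum_abs _ _
    linarith [Finset.add_sum_erase s (fun i => |e i|) hk]
  calc ∑ i ∈ s, e i ^ 2 = ∑ i ∈ s, |e i| * |e i| := by simp_rw [abs_mul_abs_self, sq]
    _ ≤ ∑ i ∈ s, |e i| * (S / 2) :=
        Finset.sum_le_sum fun i hi => mul_le_mul_of_nonneg_left (hmax i hi) (abs_nonneg _)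
    _ = S ^ 2 / 2 := by rw [← Finset.sum_mul]; ring

namespace Matrix

variable {n : Type*} [Fintype n]

lemma PosSemidef.re_trace_nonneg {A : Matrix n n ℂ} (hA : A.PosSemidef) : 0 ≤ A.trace.re :=
  (Complex.nonneg_iff.mp hA.trace_nonneg).1

lemma re_star_dotProduct_mulVec_le (X : Matrix n n ℂ) {u : EuclideanSpace ℂ n} (hu : ‖u‖ = 1)
    {p : ℝ} (hp : 0 ≤ p) (h : (Xᴴ * X) *ᵥ u = (p ^ 2 : ℝ) • ⇑u) :
    (star ⇑u ⬝ᵥ (X *ᵥ ⇑u)).re ≤ p := by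
  set v : EuclideanSpace ℂ n := WithLp.toLp 2 (X *ᵥ ⇑u)
  have hv : ‖v‖ ^ 2 = p ^ 2 := by
    have hu2 : star ⇑u ⬝ᵥ ⇑u = 1 := by
      rw [dotProduct_comm, ← EuclideanSpace.inner_eq_star_dotProduct, inner_self_eq_norm_sq_to_K,
        hu]
      simp
    rw [← RCLike.ofReal_inj (K := ℂ), RCLike.ofReal_pow, ← inner_self_eq_norm_sq_to_K,
      EuclideanSpace.inner_eq_star_dotProduct, dotProduct_comm, star_mulVec, ← dotProduct_mulVec,
      mulVec_mulVec, h, dotProduct_smul, hu2]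
    simp
  calc (star ⇑u ⬝ᵥ (X *ᵥ ⇑u)).re = (⟪u, v⟫_ℂ).re := by
        rw [EuclideanSpace.inner_eq_star_dotProduct, dotProduct_comm]
    _ ≤ ‖u‖ * ‖v‖ := re_inner_le_norm (𝕜 := ℂ) u v
    _ = p := by rw [hu, one_mul, ← sq_eq_sq₀ (norm_nonneg v) hp, hv]

variable [DecidableEq n]

lemma IsHermitian.trace_cfc {𝕜 : Type*} [RCLike 𝕜] {A : Matrix n n 𝕜} (hA : A.IsHermitian)
    (f : ℝ → ℝ) :
    (cfc f A).trace = ∑ i, (f (hA.eigenvalues i) : 𝕜) := by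
  rw [hA.cfc_eq, IsHermitian.cfc, Unitary.conjStarAlgAut_apply, trace_mul_cycle,
    Unitary.coe_star_mul_self, one_mul, trace_diagonal]
  rfl

lemma trace_eq_sum_star_dotProduct_mulVec (X : Matrix n n ℂ)
    (b : OrthonormalBasis n ℂ (EuclideanSpace ℂ n)) :
    X.trace = ∑ i, star ⇑(b i) ⬝ᵥ (X *ᵥ ⇑(b i)) := by
  have hconj : toEuclideanLin X = (WithLp.linearEquiv 2 ℂ (n → ℂ)).symm.conj (toLin' X) := rfl
  rw [← trace_toLin'_eq, ← LinearMap.trace_conj' _ (WithLp.linearEquiv 2 ℂ (n → ℂ)).symm,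
    ← hconj, LinearMap.trace_eq_sum_inner _ b]
  simp [EuclideanSpace.inner_eq_star_dotProduct, dotProduct_comm]

lemma IsHermitian.of_algebraMap_le {B : Matrix n n ℂ} {c : ℝ}
    (hB : algebraMap ℝ (Matrix n n ℂ) c ≤ B) : B.IsHermitian := by
  simpa using hB.1.add ((IsSelfAdjoint.all c).algebraMap (Matrix n n ℂ))

lemma sqrt_eq_cfc_real_sqrt {A : Matrix n n ℂ} (hA : A.PosSemidef) :
    CFC.sqrt A = cfc Real.sqrt A := by
  rw [CFC.sqrt_eq_real_sqrt A hA.nonneg, cfcₙ_eq_cfc]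

end Matrix

open Matrix

section

variable {n : Type*} [Fintype n]

lemma frobNorm_sq (X : Matrix n n ℂ) : frobNorm X ^ 2 = (Xᴴ * X).trace.re :=
  Real.sq_sqrt (posSemidef_conjTranspose_mul_self X).re_trace_nonneg

variable [DecidableEq n]

lemma msqrt_eq_sqrt {A : Matrix n n ℂ} (hA : A.PosSemidef) : msqrt A = CFC.sqrt A := by
  rw [sqrt_eq_cfc_real_sqrt hA, hA.1.cfc_eq, IsHermitian.cfc, Unitary.conjStarAlgAut_apply, msqrt,
    dif_pos hA]
  rfl

lemma msqrt_conjTranspose_mul_self (X : Matrix n n ℂ) : msqrt (Xᴴ * X) = CFC.abs X := by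
  rw [msqrt_eq_sqrt (posSemidef_conjTranspose_mul_self X), CFC.abs, star_eq_conjTranspose]

lemma traceNorm_eq_re_trace_abs (X : Matrix n n ℂ) : traceNorm X = (CFC.abs X).trace.re := by
  rw [← msqrt_conjTranspose_mul_self, msqrt, dif_pos (posSemidef_conjTranspose_mul_self X)]
  rfl

lemma traceNorm_nonneg (X : Matrix n n ℂ) : 0 ≤ traceNorm X := by
  rw [traceNorm_eq_re_trace_abs]
  exact (CFC.abs_nonneg X).posSemidef.re_trace_nonneg

lemma traceNorm_eq_sum_abs_eigenvalues {X : Matrix n n ℂ} (hX : X.IsHermitian) :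
    traceNorm X = ∑ i, |hX.eigenvalues i| := by
  rw [traceNorm_eq_re_trace_abs, CFC.abs_eq_cfc_norm X hX.isSelfAdjoint, hX.trace_cfc]
  simp

lemma frobNorm_sq_eq_sum_eigenvalues_sq {X : Matrix n n ℂ} (hX : X.IsHermitian) :
    frobNorm X ^ 2 = ∑ i, hX.eigenvalues i ^ 2 := by
  rw [frobNorm_sq, hX.eq, ← sq, ← cfc_pow_id (R := ℝ) X 2 hX.isSelfAdjoint, hX.trace_cfc]
  norm_cast

lemma frobNorm_sq_le_of_trace_eq_zero {Δ : Matrix n n ℂ} (hΔ : Δ.IsHermitian)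
    (h0 : Δ.trace = 0) : frobNorm Δ ^ 2 ≤ traceNorm Δ ^ 2 / 2 := by
  rw [frobNorm_sq_eq_sum_eigenvalues_sq hΔ, traceNorm_eq_sum_abs_eigenvalues hΔ]
  refine Finset.sum_sq_le_sq_sum_abs_div_two _ _ ?_
  have htr := hΔ.trace_eq_sum_eigenvalues
  rw [h0, eq_comm, ← RCLike.ofReal_sum, RCLike.ofReal_eq_zero] at htr
  exact htr

lemma re_trace_le_traceNorm (X : Matrix n n ℂ) : X.trace.re ≤ traceNorm X := by
  have hP : (CFC.abs X).PosSemidef := (CFC.abs_nonneg X).posSemidef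
  have hPP : Xᴴ * X = CFC.abs X * CFC.abs X := by rw [← sq, CFC.abs_sq, star_eq_conjTranspose]
  have htr : (CFC.abs X).trace.re = ∑ i, hP.1.eigenvalues i := by
    simp [hP.1.trace_eq_sum_eigenvalues]
  rw [traceNorm_eq_re_trace_abs, htr, trace_eq_sum_star_dotProduct_mulVec X hP.1.eigenvectorBasis,
    Complex.re_sum]
  refine Finset.sum_le_sum fun i _ => re_star_dotProduct_mulVec_le X
    (hP.1.eigenvectorBasis.orthonormal.1 i) (hP.eigenvalues_nonneg i) ?_
  rw [hPP, ← mulVec_mulVec, hP.1.mulVec_eigenvectorBasis, mulVec_smul,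
    hP.1.mulVec_eigenvectorBasis, smul_smul, sq]

lemma fidelity_eq_traceNorm {ρ σ : Matrix n n ℂ} (hρ : ρ.PosSemidef) (hσ : σ.PosSemidef) :
    fidelity ρ σ = traceNorm (CFC.sqrt σ * CFC.sqrt ρ) := by
  have hsandwich : msqrt ρ * σ * msqrt ρ =
      (CFC.sqrt σ * CFC.sqrt ρ)ᴴ * (CFC.sqrt σ * CFC.sqrt ρ) := by
    rw [msqrt_eq_sqrt hρ, conjTranspose_mul, (CFC.sqrt_nonneg ρ).posSemidef.1.eq,
      (CFC.sqrt_nonneg σ).posSemidef.1.eq]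
    conv_lhs => rw [← CFC.sqrt_mul_sqrt_self σ hσ.nonneg]
    simp only [mul_assoc]
  rw [fidelity, hsandwich, msqrt_conjTranspose_mul_self, traceNorm_eq_re_trace_abs]

lemma one_sub_frobNorm_sq_div_two_le_fidelity {ρ σ : Matrix n n ℂ} (hρ : IsDensityMatrix ρ)
    (hσ : IsDensityMatrix σ) :
    1 - frobNorm (CFC.sqrt ρ - CFC.sqrt σ) ^ 2 / 2 ≤ fidelity ρ σ := by
  set A := CFC.sqrt ρ
  set B := CFC.sqrt σ
  have hA : Aᴴ = A := (CFC.sqrt_nonneg ρ).posSemidef.1.eq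
  have hB : Bᴴ = B := (CFC.sqrt_nonneg σ).posSemidef.1.eq
  have hexpand : (A - B)ᴴ * (A - B) = A * A + B * B - A * B - B * A := by
    rw [conjTranspose_sub, hA, hB]
    noncomm_ring
  have hfrob : frobNorm (A - B) ^ 2 = 2 - 2 * (B * A).trace.re := by
    rw [frobNorm_sq, hexpand, CFC.sqrt_mul_sqrt_self ρ hρ.1.nonneg,
      CFC.sqrt_mul_sqrt_self σ hσ.1.nonneg, trace_sub, trace_sub, trace_add, hρ.2, hσ.2,
      trace_mul_comm A B]
    simp only [Complex.sub_re, Complex.add_re, Complex.one_re]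
    ring
  rw [fidelity_eq_traceNorm hρ.1 hσ.1, hfrob]
  linarith [re_trace_le_traceNorm (B * A)]

lemma algebraMap_sqrt_le_sqrt {σ : Matrix n n ℂ} (hσ : σ.PosSemidef) {r : ℝ}
    (hr : ∀ i, r ≤ hσ.1.eigenvalues i) : algebraMap ℝ (Matrix n n ℂ) √r ≤ CFC.sqrt σ := by
  rw [sqrt_eq_cfc_real_sqrt hσ]
  refine algebraMap_le_cfc _ _ _ fun x hx => ?_
  obtain ⟨i, rfl⟩ := hσ.1.spectrum_real_eq_range_eigenvalues ▸ hx
  exact Real.sqrt_le_sqrt (hr i)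

lemma mul_re_trace_mul_self_sub_le {A B : Matrix n n ℂ} (hA : A.PosSemidef) {c : ℝ}
    (hB : algebraMap ℝ (Matrix n n ℂ) c ≤ B) :
    c * ((A - B) * (A - B)).trace.re ≤ ((A - B) * (A * A - B * B)).trace.re := by
  set X := A - B with hXdef
  have hX : Xᴴ = X := by rw [conjTranspose_sub, hA.1.eq, (IsHermitian.of_algebraMap_le hB).eq]
  have hsylvester : A * X + X * B = A * A - B * B := by rw [hXdef]; noncomm_ring
  have hXAX : 0 ≤ (X * A * X).trace.re := by
    simpa [hX] using (hA.conjTranspose_mul_mul_same X).re_trace_nonneg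
  have hXBX : c * (X * X).trace.re ≤ (X * B * X).trace.re := by
    have h := (PosSemidef.conjTranspose_mul_mul_same hB X).re_trace_nonneg
    simpa [hX, Algebra.algebraMap_eq_smul_one, mul_sub, sub_mul, trace_sub] using h
  rw [← hsylvester, mul_add, trace_add, Complex.add_re, ← mul_assoc, trace_mul_comm X (X * B)]
  linarith

lemma mul_frobNorm_sub_le_frobNorm_mul_self_sub {A B : Matrix n n ℂ} (hA : A.PosSemidef) {c : ℝ}
    (hc : 0 ≤ c) (hB : algebraMap ℝ (Matrix n n ℂ) c ≤ B) :
    c * frobNorm (A - B) ≤ frobNorm (A * A - B * B) := by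
  have hBh := IsHermitian.of_algebraMap_le hB
  have hlower := mul_re_trace_mul_self_sub_le hA hB
  set X := A - B
  set Δ := A * A - B * B
  have hX : Xᴴ = X := by rw [conjTranspose_sub, hA.1.eq, hBh.eq]
  have hΔ : Δᴴ = Δ := by
    rw [conjTranspose_sub, conjTranspose_mul, conjTranspose_mul, hA.1.eq, hBh.eq]
  have hquad := (posSemidef_conjTranspose_mul_self ((c : ℂ) • X - Δ)).re_trace_nonneg
  simp only [Complex.coe_smul, conjTranspose_sub, conjTranspose_smul, star_trivial, hX, hΔ,
    mul_sub, Algebra.mul_smul_comm, sub_mul, Algebra.smul_mul_assoc, trace_sub, trace_smul,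
    Complex.real_smul, trace_mul_comm Δ X, Complex.sub_re, Complex.mul_re, Complex.ofReal_re, Complex.ofReal_im,
    zero_mul, sub_zero, Complex.mul_im, add_zero, sub_nonneg, tsub_le_iff_right] at hquad
  refine le_of_pow_le_pow_left₀ two_ne_zero (Real.sqrt_nonneg _) ?_
  rw [mul_pow, frobNorm_sq, frobNorm_sq, hX, hΔ]
  linear_combination hquad + 2 * mul_le_mul_of_nonneg_left hlower hc

end

theorem bures_le_trace_near_full_rank_general {d : ℕ}
    (σ : Matrix (Fin d) (Fin d) ℂ) (hσ : IsDensityMatrix σ)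
    (lmin : ℝ) (hlmin : lmin = ⨅ i, hσ.1.1.eigenvalues i) (hlpos : 0 < lmin) :
    ∃ ε : ℝ, 0 < ε ∧ ∀ ρ : Matrix (Fin d) (Fin d) ℂ, IsDensityMatrix ρ →
      trDist ρ σ ≤ ε → buresDist ρ σ ≤ trDist ρ σ / Real.sqrt lmin := by
  refine ⟨1, one_pos, fun ρ hρ _ => ?_⟩
  have hlower : algebraMap ℝ _ √lmin ≤ CFC.sqrt σ :=
    algebraMap_sqrt_le_sqrt hσ.1 fun i => hlmin ▸ ciInf_le (Finite.bddBelow_range _) i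
  have hfid := one_sub_frobNorm_sq_div_two_le_fidelity hρ hσ
  have hsylvester := mul_frobNorm_sub_le_frobNorm_mul_self_sub (CFC.sqrt_nonneg ρ).posSemidef
    (Real.sqrt_nonneg lmin) hlower
  rw [CFC.sqrt_mul_sqrt_self ρ hρ.1.nonneg, CFC.sqrt_mul_sqrt_self σ hσ.1.nonneg] at hsylvester
  have htraceless := frobNorm_sq_le_of_trace_eq_zero (hρ.1.1.sub hσ.1.1)
    (by rw [trace_sub, hρ.2, hσ.2, sub_self])
  have hbound : (1 - fidelity ρ σ) * lmin ≤ trDist ρ σ ^ 2 :=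
    calc (1 - fidelity ρ σ) * lmin
        ≤ frobNorm (CFC.sqrt ρ - CFC.sqrt σ) ^ 2 / 2 * lmin := by gcongr; linarith
      _ = (√lmin * frobNorm (CFC.sqrt ρ - CFC.sqrt σ)) ^ 2 / 2 := by
          rw [mul_pow, Real.sq_sqrt hlpos.le]; ring
      _ ≤ frobNorm (ρ - σ) ^ 2 / 2 := by
          gcongr
          exact mul_nonneg (Real.sqrt_nonneg _) (Real.sqrt_nonneg _)
      _ ≤ trDist ρ σ ^ 2 := by rw [trDist, div_pow]; linarith
  have htr : 0 ≤ trDist ρ σ := div_nonneg (traceNorm_nonneg _) zero_le_two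
  rw [buresDist, Real.sqrt_le_iff, div_pow, Real.sq_sqrt hlpos.le, le_div_iff₀ hlpos]
  exact ⟨by positivity, hbound⟩

/-- **Trace vs. Bures distance infinitesimally.** -/
theorem bures_le_trace_near_full_rank {d : ℕ}
    (σ : Matrix (Fin d) (Fin d) ℂ) (hσ : IsDensityMatrix σ) (hpd : σ.PosDef)
    (lmin : ℝ) (hlmin : lmin = ⨅ i, hσ.1.1.eigenvalues i) (hlpos : 0 < lmin) :
    ∃ ε : ℝ, 0 < ε ∧ ∀ ρ : Matrix (Fin d) (Fin d) ℂ, IsDensityMatrix ρ →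
      trDist ρ σ ≤ ε → buresDist ρ σ ≤ trDist ρ σ / Real.sqrt lmin :=
  bures_le_trace_near_full_rank_general σ hσ lmin hlmin hlpos
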